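/- arXiv:2308.10098 — 4 statements merged into one kernel-verified Lean document; each statement's English description precedes it below -/
import Mathlib

section
/- Let g : ℝⁿ → ℝ be L-smooth with constant L_{∇g} > 0, let λ ∈ ℝ, α ≥ 0 and z ∈ ℝ^d. Let x̂₁, x̂₂, x̃₁, x̃₂ ∈ ℝⁿ and ε₁, ε₂ ≥ 0 with ‖x̂₁ − x̃₁‖ ≤ ε₁ and ‖x̂₂ − x̃₂‖ ≤ ε₂. Define Ū(x, ε) = g(x) + ‖∇g(x)‖ ε + (L_{∇g}/2) ε², U̲(x, ε) = g(x) − ‖∇g(x)‖ ε − (L_{∇g}/2) ε², and ψ(α) = Ū(x̃₂, ε₂) − U̲(x̃₁, ε₁) + λ α ‖z‖². If ψ(α) ≤ 0, then g(x̂₂) − g(x̂₁) ≤ −λ α ‖z‖². -/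
/-!
By the descent lemma, a function with `L`-Lipschitz gradient deviates from its linearization at
`x̃` by at most `L/2 ‖x - x̃‖²`. Hence `U̲(x̃, ε) ≤ g x̂ ≤ Ū(x̃, ε)` whenever `‖x̂ - x̃‖ ≤ ε`, so
`g x̂₂ - g x̂₁ ≤ Ū(x̃₂, ε₂) - U̲(x̃₁, ε₁)`, which `ψ(α) ≤ 0` bounds by `-λ α ‖z‖²`.
-/

open scoped RealInnerProductSpace Gradient

variable {E : Type*} [NormedAddCommGroup E] [InnerProductSpace ℝ E] [CompleteSpace E]
  {g : E → ℝ} {L : ℝ}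

theorem HasGradientAt.hasDerivAt_comp_add_smul {g' y v : E} {t : ℝ}
    (h : HasGradientAt g g' (y + t • v)) :
    HasDerivAt (fun s : ℝ => g (y + s • v)) ⟪g', v⟫ t := by
  have hline : HasDerivAt (fun s : ℝ => y + s • v) v t := by
    simpa using ((hasDerivAt_id t).smul_const v).const_add y
  simpa [Function.comp_def] using (hasGradientAt_iff_hasFDerivAt.1 h).comp_hasDerivAt t hline

theorem abs_sub_sub_inner_gradient_le (hg : Differentiable ℝ g)
    (hlip : ∀ x y, ‖∇ g x - ∇ g y‖ ≤ L * ‖x - y‖) (x y : E) :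
    |g x - g y - ⟪∇ g y, x - y⟫| ≤ L / 2 * ‖x - y‖ ^ 2 := by
  set v := x - y
  let φ : ℝ → ℝ := fun t => g (y + t • v) - g y - t * ⟪∇ g y, v⟫
  have hφ : ∀ t, HasDerivAt φ ⟪∇ g (y + t • v) - ∇ g y, v⟫ t := fun t => by
    rw [inner_sub_left]
    exact (((hg _).hasGradientAt.hasDerivAt_comp_add_smul).sub_const _).sub
      (hasDerivAt_mul_const _)
  have hB : ∀ t, HasDerivAt (fun t => L / 2 * t ^ 2 * ‖v‖ ^ 2) (L * t * ‖v‖ ^ 2) t := fun t => by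
    refine (((hasDerivAt_pow 2 t).const_mul (L / 2)).mul_const (‖v‖ ^ 2)).congr_deriv ?_
    simp only [Nat.add_one_sub_one, pow_one, Nat.cast_ofNat]; ring
  have hφ' : ∀ t ∈ Set.Ico (0 : ℝ) 1,
      ‖⟪∇ g (y + t • v) - ∇ g y, v⟫‖ ≤ L * t * ‖v‖ ^ 2 := fun t ht =>
    calc ‖⟪∇ g (y + t • v) - ∇ g y, v⟫‖ ≤ ‖∇ g (y + t • v) - ∇ g y‖ * ‖v‖ :=
          norm_inner_le_norm _ _
      _ ≤ L * ‖y + t • v - y‖ * ‖v‖ := by gcongr; exact hlip _ _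
      _ = L * t * ‖v‖ ^ 2 := by
          rw [add_sub_cancel_left, norm_smul, Real.norm_of_nonneg ht.1]; ring
  -- `φ 0 = 0` and `|φ' t| ≤ L t ‖v‖²`, the derivative of `L/2 t² ‖v‖²`, which therefore bounds `|φ|`.
  have hφ_le := image_norm_le_of_norm_deriv_right_le_deriv_boundary
    (fun t _ => (hφ t).continuousAt.continuousWithinAt) (fun t _ => (hφ t).hasDerivWithinAt)
    (by simp [φ]) hB hφ' (Set.right_mem_Icc.2 zero_le_one)
  simpa [φ, v] using hφ_le

theorem abs_sub_le_norm_gradient_mul_add (hL : 0 ≤ L) (hg : Differentiable ℝ g)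
    (hlip : ∀ x y, ‖∇ g x - ∇ g y‖ ≤ L * ‖x - y‖) {x y : E} {ε : ℝ} (h : ‖x - y‖ ≤ ε) :
    |g x - g y| ≤ ‖∇ g y‖ * ε + L / 2 * ε ^ 2 :=
  calc |g x - g y| = |⟪∇ g y, x - y⟫ + (g x - g y - ⟪∇ g y, x - y⟫)| := by ring_nf
    _ ≤ |⟪∇ g y, x - y⟫| + |g x - g y - ⟪∇ g y, x - y⟫| := abs_add_le _ _
    _ ≤ ‖∇ g y‖ * ‖x - y‖ + L / 2 * ‖x - y‖ ^ 2 :=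
        add_le_add (abs_real_inner_le_norm _ _) (abs_sub_sub_inner_gradient_le hg hlip x y)
    _ ≤ ‖∇ g y‖ * ε + L / 2 * ε ^ 2 := by gcongr

theorem inexact_line_search_sufficient_decrease_general
    {n d : ℕ} (g : EuclideanSpace ℝ (Fin n) → ℝ) (Lg : ℝ) (hLg : 0 < Lg)
    (hdiff : Differentiable ℝ g)
    (hlip : ∀ x y, ‖gradient g x - gradient g y‖ ≤ Lg * ‖x - y‖)
    (lam α : ℝ) (z : EuclideanSpace ℝ (Fin d))
    (xhat₁ xhat₂ xtilde₁ xtilde₂ : EuclideanSpace ℝ (Fin n))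
    (ε₁ ε₂ : ℝ)
    (happrox₁ : ‖xhat₁ - xtilde₁‖ ≤ ε₁) (happrox₂ : ‖xhat₂ - xtilde₂‖ ≤ ε₂)
    (hψ : (g xtilde₂ + ‖gradient g xtilde₂‖ * ε₂ + Lg / 2 * ε₂ ^ 2)
        - (g xtilde₁ - ‖gradient g xtilde₁‖ * ε₁ - Lg / 2 * ε₁ ^ 2)
        + lam * α * ‖z‖ ^ 2 ≤ 0) :
    g xhat₂ - g xhat₁ ≤ -(lam * α * ‖z‖ ^ 2) := by
  have h₁ := abs_le.1 (abs_sub_le_norm_gradient_mul_add hLg.le hdiff hlip happrox₁)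
  have h₂ := abs_le.1 (abs_sub_le_norm_gradient_mul_add hLg.le hdiff hlip happrox₂)
  linarith [h₁.1, h₂.2]

theorem inexact_line_search_sufficient_decrease
    {n d : ℕ} (g : EuclideanSpace ℝ (Fin n) → ℝ) (Lg : ℝ) (hLg : 0 < Lg)
    (hdiff : Differentiable ℝ g)
    (hlip : ∀ x y, ‖gradient g x - gradient g y‖ ≤ Lg * ‖x - y‖)
    (lam α : ℝ) (hα : 0 ≤ α) (z : EuclideanSpace ℝ (Fin d))
    (xhat₁ xhat₂ xtilde₁ xtilde₂ : EuclideanSpace ℝ (Fin n))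
    (ε₁ ε₂ : ℝ) (hε₁ : 0 ≤ ε₁) (hε₂ : 0 ≤ ε₂)
    (happrox₁ : ‖xhat₁ - xtilde₁‖ ≤ ε₁) (happrox₂ : ‖xhat₂ - xtilde₂‖ ≤ ε₂)
    (hψ : (g xtilde₂ + ‖gradient g xtilde₂‖ * ε₂ + Lg / 2 * ε₂ ^ 2)
        - (g xtilde₁ - ‖gradient g xtilde₁‖ * ε₁ - Lg / 2 * ε₁ ^ 2)
        + lam * α * ‖z‖ ^ 2 ≤ 0) :
    g xhat₂ - g xhat₁ ≤ -(lam * α * ‖z‖ ^ 2) :=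
  inexact_line_search_sufficient_decrease_general g Lg hLg hdiff hlip lam α z xhat₁ xhat₂ xtilde₁
    xtilde₂ ε₁ ε₂ happrox₁ happrox₂ hψ
end

section
/- Let L_{∇f}, L_{∇g} > 0, w ≥ 0, Z > 0 and λ < η be real numbers, and define s = (1/(2 L_{∇g})) (√(w² + (L_{∇g}/L_{∇f}) (η − λ)² Z²) − w) and, for ε̄ ≥ 0, φ(α) = 2 w ε̄ + 2 L_{∇g} ε̄² + (α² L_{∇f}/2 + (λ − η) α) Z². Then for every ε̄ ∈ [0, s): the quantity (η − λ)² − 4 L_{∇f} (w ε̄ + L_{∇g} ε̄²)/Z² is strictly positive, so ŝ = √((η − λ)² − 4 L_{∇f} (w ε̄ + L_{∇g} ε̄²)/Z²) > 0; setting α̲ = (η − λ − ŝ)/L_{∇f} and ᾱ = (η − λ + ŝ)/L_{∇f}, one has 0 ≤ α̲ < ᾱ and φ(α) ≤ 0 for all α ∈ [α̲, ᾱ]. -/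
/-!
`φ` is a convex quadratic in `α` whose roots are `α̲` and `ᾱ`; its discriminant is positive
exactly when `4 L_{∇f} (w ε̄ + L_{∇g} ε̄²) < (η - λ)² Z²`, and `s` is the positive root of this
quadratic condition in `ε̄`.
-/

open Real

lemma quadratic_lt_of_lt_pos_root {a b c x : ℝ} (ha : 0 < a) (hb : 0 ≤ b) (hx : 0 ≤ x)
    (h : x < 1 / (2 * a) * (√(b ^ 2 + c) - b)) :
    4 * a * (a * x ^ 2 + b * x) < c := by
  have hlin : 2 * a * x + b < √(b ^ 2 + c) := by
    rw [one_div, ← div_eq_inv_mul, lt_div_iff₀ (by positivity)] at h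
    linarith
  linear_combination (lt_sqrt (by positivity)).1 hlin

lemma quadratic_nonpos_of_mem_Icc_roots {L Z β c d α : ℝ} (hL : 0 < L)
    (hcd : 2 * L * c = d * Z ^ 2) (hD : 0 ≤ β ^ 2 - d)
    (hlow : (β - √(β ^ 2 - d)) / L ≤ α) (hhigh : α ≤ (β + √(β ^ 2 - d)) / L) :
    c + (α ^ 2 * L / 2 - β * α) * Z ^ 2 ≤ 0 := by
  rw [div_le_iff₀ hL] at hlow
  rw [le_div_iff₀ hL] at hhigh
  have hsq : (α * L - β) ^ 2 ≤ β ^ 2 - d := by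
    rw [← sq_sqrt hD]
    exact sq_le_sq' (by linarith) (by linarith)
  have hscaled : 2 * L * (c + (α ^ 2 * L / 2 - β * α) * Z ^ 2)
      = ((α * L - β) ^ 2 - (β ^ 2 - d)) * Z ^ 2 := by
    linear_combination hcd
  refine nonpos_of_mul_nonpos_right ?_ (by positivity : 0 < 2 * L)
  rw [hscaled]
  exact mul_nonpos_of_nonpos_of_nonneg (by linarith) (sq_nonneg Z)

theorem step_size_interval_exists_general
    (Lf Lg w Z lam η : ℝ) (hLf : 0 < Lf) (hLg : 0 < Lg) (hw : 0 ≤ w)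
    (hlη : lam < η) :
    ∀ ebar : ℝ, 0 ≤ ebar →
      ebar < (1 / (2 * Lg)) *
        (Real.sqrt (w ^ 2 + (Lg / Lf) * (η - lam) ^ 2 * Z ^ 2) - w) →
      0 < (η - lam) ^ 2 - 4 * Lf * (w * ebar + Lg * ebar ^ 2) / Z ^ 2 ∧
      0 < Real.sqrt ((η - lam) ^ 2 - 4 * Lf * (w * ebar + Lg * ebar ^ 2) / Z ^ 2) ∧
      0 ≤ (η - lam
          - Real.sqrt ((η - lam) ^ 2 - 4 * Lf * (w * ebar + Lg * ebar ^ 2) / Z ^ 2)) / Lf ∧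
      (η - lam
          - Real.sqrt ((η - lam) ^ 2 - 4 * Lf * (w * ebar + Lg * ebar ^ 2) / Z ^ 2)) / Lf
        < (η - lam
          + Real.sqrt ((η - lam) ^ 2 - 4 * Lf * (w * ebar + Lg * ebar ^ 2) / Z ^ 2)) / Lf ∧
      ∀ α : ℝ,
        (η - lam
          - Real.sqrt ((η - lam) ^ 2 - 4 * Lf * (w * ebar + Lg * ebar ^ 2) / Z ^ 2)) / Lf ≤ α →
        α ≤ (η - lam
          + Real.sqrt ((η - lam) ^ 2 - 4 * Lf * (w * ebar + Lg * ebar ^ 2) / Z ^ 2)) / Lf →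
        2 * w * ebar + 2 * Lg * ebar ^ 2
          + (α ^ 2 * Lf / 2 + (lam - η) * α) * Z ^ 2 ≤ 0 := by
  intro e he hlt
  have hkey : 4 * Lf * (w * e + Lg * e ^ 2) < (η - lam) ^ 2 * Z ^ 2 := by
    have h := quadratic_lt_of_lt_pos_root hLg hw he hlt
    rw [show Lg / Lf * (η - lam) ^ 2 * Z ^ 2 = Lg * ((η - lam) ^ 2 * Z ^ 2) / Lf by ring,
      lt_div_iff₀ hLf] at h
    exact lt_of_mul_lt_mul_left (by linear_combination h) hLg.le
  have hnum : 0 ≤ 4 * Lf * (w * e + Lg * e ^ 2) := by positivity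
  have hZ : 0 < Z ^ 2 := pos_of_mul_pos_right (hnum.trans_lt hkey) (sq_nonneg _)
  set d := 4 * Lf * (w * e + Lg * e ^ 2) / Z ^ 2 with hd
  have hD : 0 < (η - lam) ^ 2 - d := sub_pos.2 ((div_lt_iff₀ hZ).2 hkey)
  have hsqrt : 0 < √((η - lam) ^ 2 - d) := sqrt_pos.2 hD
  have hsqrt_le : √((η - lam) ^ 2 - d) ≤ η - lam :=
    sqrt_le_iff.2 ⟨by linarith, by linarith [div_nonneg hnum hZ.le]⟩
  refine ⟨hD, hsqrt, div_nonneg (by linarith) hLf.le,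
    div_lt_div_of_pos_right (by linarith) hLf, fun α hlow hhigh => ?_⟩
  have hcd : 2 * Lf * (2 * w * e + 2 * Lg * e ^ 2) = d * Z ^ 2 := by
    rw [hd, div_mul_cancel₀ _ hZ.ne']
    ring
  linear_combination quadratic_nonpos_of_mem_Icc_roots hLf hcd hD.le hlow hhigh

theorem step_size_interval_exists
    (Lf Lg w Z lam η : ℝ) (hLf : 0 < Lf) (hLg : 0 < Lg) (hw : 0 ≤ w)
    (hZ : 0 < Z) (hlη : lam < η) :
    ∀ ebar : ℝ, 0 ≤ ebar →
      ebar < (1 / (2 * Lg)) *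
        (Real.sqrt (w ^ 2 + (Lg / Lf) * (η - lam) ^ 2 * Z ^ 2) - w) →
      0 < (η - lam) ^ 2 - 4 * Lf * (w * ebar + Lg * ebar ^ 2) / Z ^ 2 ∧
      0 < Real.sqrt ((η - lam) ^ 2 - 4 * Lf * (w * ebar + Lg * ebar ^ 2) / Z ^ 2) ∧
      0 ≤ (η - lam
          - Real.sqrt ((η - lam) ^ 2 - 4 * Lf * (w * ebar + Lg * ebar ^ 2) / Z ^ 2)) / Lf ∧
      (η - lam
          - Real.sqrt ((η - lam) ^ 2 - 4 * Lf * (w * ebar + Lg * ebar ^ 2) / Z ^ 2)) / Lf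
        < (η - lam
          + Real.sqrt ((η - lam) ^ 2 - 4 * Lf * (w * ebar + Lg * ebar ^ 2) / Z ^ 2)) / Lf ∧
      ∀ α : ℝ,
        (η - lam
          - Real.sqrt ((η - lam) ^ 2 - 4 * Lf * (w * ebar + Lg * ebar ^ 2) / Z ^ 2)) / Lf ≤ α →
        α ≤ (η - lam
          + Real.sqrt ((η - lam) ^ 2 - 4 * Lf * (w * ebar + Lg * ebar ^ 2) / Z ^ 2)) / Lf →
        2 * w * ebar + 2 * Lg * ebar ^ 2
          + (α ^ 2 * Lf / 2 + (lam - η) * α) * Z ^ 2 ≤ 0 :=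
  step_size_interval_exists_general Lf Lg w Z lam η hLf hLg hw hlη
end

section
/- Let ε > 0 and 0 < c̲ < 1 < c̄ be real numbers, and let (a_k)_{k≥0} be a sequence of nonnegative reals defined recursively by: a_{k+1} = c̄ a_k if a_k < ε, and a_{k+1} = c̲^{i_k} a_k if a_k ≥ ε, where i_k is the smallest nonnegative integer such that c̲^{i_k} a_k < ε. Then for all k ≥ 0, a_k ≥ min{c̲ ε, a_0}. -/
theorem step_size_sequence_lower_bound
    (ε cLow cUp : ℝ) (hε : 0 < ε) (hcLow0 : 0 < cLow) (hcLow1 : cLow < 1)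
    (hcUp : 1 < cUp)
    (a : ℕ → ℝ) (ha_nonneg : ∀ k, 0 ≤ a k) (i : ℕ → ℕ)
    (hi_lt : ∀ k, ε ≤ a k → cLow ^ (i k) * a k < ε)
    (hi_min : ∀ k, ε ≤ a k → ∀ m : ℕ, cLow ^ m * a k < ε → i k ≤ m)
    (hrec_lt : ∀ k, a k < ε → a (k + 1) = cUp * a k)
    (hrec_ge : ∀ k, ε ≤ a k → a (k + 1) = cLow ^ (i k) * a k) :
    ∀ k, min (cLow * ε) (a 0) ≤ a k := by
  intro k
  induction k with
  | zero => exact min_le_right _ _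
  | succ k ih =>
    rcases lt_or_ge (a k) ε with h | h
    · rw [hrec_lt k h]
      calc min (cLow * ε) (a 0) ≤ a k := ih
        _ = 1 * a k := (one_mul _).symm
        _ ≤ cUp * a k := mul_le_mul_of_nonneg_right hcUp.le (ha_nonneg k)
    · rw [hrec_ge k h]
      have hik : i k ≠ 0 := by
        intro h0
        have := hi_lt k h
        rw [h0, pow_zero, one_mul] at this
        exact absurd h (not_le.2 this)
      obtain ⟨j, hj⟩ := Nat.exists_eq_succ_of_ne_zero hik
      have hjge : ε ≤ cLow ^ j * a k := by
        by_contra hc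
        have := hi_min k h j (not_le.1 hc)
        omega
      calc min (cLow * ε) (a 0) ≤ cLow * ε := min_le_left _ _
        _ ≤ cLow * (cLow ^ j * a k) := mul_le_mul_of_nonneg_left hjge hcLow0.le
        _ = cLow ^ (i k) * a k := by rw [hj, pow_succ]; ring
end

section
/- Let L_{∇f} > 0, 0 < λ < η, 0 < ρ̲ < 1 < ρ̄ and β₀ > 0 be real numbers. Let (α_k), (β_k), (ᾱ_k) be sequences of positive reals and (i_k) a sequence of natural numbers such that for every k: (η − λ)/L_{∇f} ≤ ᾱ_k ≤ 2(η − λ)/L_{∇f}, α_k = ρ̲^{i_k} β_k, α_k ≤ ᾱ_k, if i_k > 0 then α_k > ρ̲ ᾱ_k, and β_{k+1} = ρ̄ α_k. Then for all k, α_k ≥ τ, where τ = min{ρ̲ (η − λ)/L_{∇f}, β₀}. -/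
theorem uniform_step_size_lower_bound
    (Lf lam η ρLow ρUp β₀ : ℝ)
    (hLf : 0 < Lf) (hlam : 0 < lam) (hlη : lam < η)
    (hρLow0 : 0 < ρLow) (hρLow1 : ρLow < 1) (hρUp : 1 < ρUp) (hβ₀ : 0 < β₀)
    (α β alphaBar : ℕ → ℝ) (i : ℕ → ℕ)
    (hαpos : ∀ k, 0 < α k) (hβpos : ∀ k, 0 < β k)
    (hbarpos : ∀ k, 0 < alphaBar k)
    (hβ0 : β 0 = β₀)
    (hbar_low : ∀ k, (η - lam) / Lf ≤ alphaBar k)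
    (hbar_up : ∀ k, alphaBar k ≤ 2 * (η - lam) / Lf)
    (hα : ∀ k, α k = ρLow ^ (i k) * β k)
    (hα_le : ∀ k, α k ≤ alphaBar k)
    (hα_gt : ∀ k, 0 < i k → ρLow * alphaBar k < α k)
    (hβrec : ∀ k, β (k + 1) = ρUp * α k) :
    ∀ k, min (ρLow * (η - lam) / Lf) β₀ ≤ α k := by
  intro k
  induction k with
  | zero =>
    by_cases h : 0 < i 0
    · have := hα_gt 0 h
      have h2 : ρLow * ((η - lam) / Lf) ≤ ρLow * alphaBar 0 :=
        mul_le_mul_of_nonneg_left (hbar_low 0) hρLow0.le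
      calc min (ρLow * (η - lam) / Lf) β₀ ≤ ρLow * (η - lam) / Lf := min_le_left _ _
        _ = ρLow * ((η - lam) / Lf) := by ring
        _ ≤ ρLow * alphaBar 0 := h2
        _ ≤ α 0 := this.le
    · have hi : i 0 = 0 := Nat.eq_zero_of_not_pos h
      have : α 0 = β₀ := by rw [hα 0, hi, pow_zero, one_mul, hβ0]
      rw [this]; exact min_le_right _ _
  | succ n ih =>
    by_cases h : 0 < i (n+1)
    · have := hα_gt (n+1) h
      have h2 : ρLow * ((η - lam) / Lf) ≤ ρLow * alphaBar (n+1) :=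
        mul_le_mul_of_nonneg_left (hbar_low (n+1)) hρLow0.le
      calc min (ρLow * (η - lam) / Lf) β₀ ≤ ρLow * (η - lam) / Lf := min_le_left _ _
        _ = ρLow * ((η - lam) / Lf) := by ring
        _ ≤ ρLow * alphaBar (n+1) := h2
        _ ≤ α (n+1) := this.le
    · have hi : i (n+1) = 0 := Nat.eq_zero_of_not_pos h
      have hβ : α (n+1) = β (n+1) := by rw [hα (n+1), hi, pow_zero, one_mul]
      have : α n ≤ β (n+1) := by
        rw [hβrec n]
        nlinarith [hαpos n]
      rw [hβ]; exact le_trans ih this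
end
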